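/- Let k ≥ 1 be an integer and set l = k+2. Then the set R^{k+2}_k has exactly (k+2)(k+1) + 2 elements (it is a root system of type A_{k+1} × A₁). -/
import Mathlib


/-- The symmetric bilinear form on `ℤ^{l+1}` with `B(e₀,e₀) = k`, `B(eᵢ,eᵢ) = -1` for
`1 ≤ i ≤ l`, and `B(eᵢ,eⱼ) = 0` for `i ≠ j`. -/
def bformZ (k l : ℕ) (v w : Fin (l + 1) → ℤ) : ℤ :=
  ((k : ℤ) + 1) * (v 0 * w 0) - ∑ i, v i * w i

/-- The vector `ω' = -(k+2)·e₀ + k·(e₁ + ⋯ + e_l)`. -/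
def omegaZ (k l : ℕ) : Fin (l + 1) → ℤ :=
  fun i => if i = 0 then -((k : ℤ) + 2) else (k : ℤ)

/-- The root system `R^l_k = {v ∈ ℤ^{l+1} : B(v,v) = -2, B(v,ω') = 0}`. -/
def rootSet (k l : ℕ) : Set (Fin (l + 1) → ℤ) :=
  {v | bformZ k l v v = -2 ∧ bformZ k l v (omegaZ k l) = 0}

namespace RootAux

variable (k : ℕ)

def Evec (i j : Fin (k+3)) : Fin (k+3) → ℤ := fun m => if m = i then 1 else if m = j then -1 else 0

def Uvec (ε : ℤ) : Fin (k+3) → ℤ := fun m => if m = 0 then ε else -ε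

lemma sums_of_mem (hk : 1 ≤ k) (v : Fin (k+3) → ℤ) (hv : v ∈ rootSet k (k+2)) :
    (∑ i : Fin (k+2), v i.succ) = -((k:ℤ)+2) * v 0 ∧
    (∑ i : Fin (k+2), (v i.succ)^2) = (k:ℤ) * (v 0)^2 + 2 := by
  obtain ⟨h1, h2⟩ := hv
  rw [bformZ] at h1 h2
  rw [Fin.sum_univ_succ] at h1 h2
  simp [omegaZ, Fin.succ_ne_zero] at h2
  rw [← Finset.sum_mul] at h2
  have hks : (1:ℤ) ≤ (k:ℤ) := by exact_mod_cast hk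
  constructor
  · nlinarith [h2]
  · have hsq : ∑ i : Fin (k+2), (v i.succ)^2 = ∑ i : Fin (k+2), v i.succ * v i.succ := by
      simp [sq]
    rw [hsq]; nlinarith [h1]

lemma mem_of_sums (v : Fin (k+3) → ℤ)
    (hS : (∑ i : Fin (k+2), v i.succ) = -((k:ℤ)+2) * v 0)
    (hQ : (∑ i : Fin (k+2), (v i.succ)^2) = (k:ℤ) * (v 0)^2 + 2) :
    v ∈ rootSet k (k+2) := by
  constructor
  · rw [bformZ, Fin.sum_univ_succ]
    have hsq : ∑ i : Fin (k+2), v i.succ * v i.succ = ∑ i : Fin (k+2), (v i.succ)^2 := by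
      simp [sq]
    rw [hsq, hQ]; ring
  · rw [bformZ, Fin.sum_univ_succ]
    simp [omegaZ, Fin.succ_ne_zero]
    rw [← Finset.sum_mul, hS]; ring

end RootAux

namespace RootAux

lemma sq_ne_two (x : ℤ) : x^2 ≠ 2 := by
  intro h
  have h1 : 2*x ≤ 3 := by nlinarith [sq_nonneg (x-1)]
  have h2 : -3 ≤ 2*x := by nlinarith [sq_nonneg (x+1)]
  have h3 : -1 ≤ x ∧ x ≤ 1 := by omega
  nlinarith

lemma sq_eq_one (x : ℤ) (h : x^2 = 1) : x = 1 ∨ x = -1 := by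
  have : (x - 1) * (x + 1) = 0 := by ring_nf; omega
  rcases mul_eq_zero.mp this with h' | h'
  · left; omega
  · right; omega

/-- classification of integer vectors with sum 0 and sum of squares 2 -/
lemma pair_classify {n : ℕ} (w : Fin n → ℤ) (hS : ∑ i, w i = 0) (hQ : ∑ i, w i ^ 2 = 2) :
    ∃ i j, i ≠ j ∧ w i = 1 ∧ w j = -1 ∧ ∀ m, m ≠ i → m ≠ j → w m = 0 := by
  classical
  set s : Finset (Fin n) := Finset.univ.filter (fun i => w i ≠ 0) with hs
  have hmem : ∀ m, m ∈ s ↔ w m ≠ 0 := by intro m; simp [hs]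
  have hq2 : ∑ i ∈ s, w i ^ 2 = 2 := by
    rw [← hQ]
    exact Finset.sum_subset (Finset.subset_univ s) (fun x _ hx => by
      have : w x = 0 := by by_contra h; exact hx ((hmem x).mpr h)
      simp [this])
  have hs0 : ∑ i ∈ s, w i = 0 := by
    rw [← hS]
    exact Finset.sum_subset (Finset.subset_univ s) (fun x _ hx => by
      by_contra h; exact hx ((hmem x).mpr h))
  have hone : ∀ i ∈ s, 1 ≤ w i ^ 2 := by
    intro i hi
    have := (hmem i).mp hi
    rcases lt_or_gt_of_ne this with h | h <;> nlinarith
  have hcard : s.card ≤ 2 := by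
    have h' : (s.card : ℤ) ≤ 2 := by
      calc (s.card : ℤ) = ∑ _i ∈ s, (1:ℤ) := by simp
      _ ≤ ∑ i ∈ s, w i ^ 2 := Finset.sum_le_sum hone
      _ = 2 := hq2
    exact_mod_cast h'
  interval_cases h : s.card
  · rw [Finset.card_eq_zero] at h
    rw [h] at hq2; simp at hq2
  · rw [Finset.card_eq_one] at h
    obtain ⟨i, hi⟩ := h
    rw [hi, Finset.sum_singleton] at hq2
    exact absurd hq2 (sq_ne_two _)
  · rw [Finset.card_eq_two] at h
    obtain ⟨i, j, hij, hij2⟩ := h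
    rw [hij2, Finset.sum_pair hij] at hq2 hs0
    have h1i : 1 ≤ w i ^ 2 := hone i (by rw [hij2]; simp)
    have h1j : 1 ≤ w j ^ 2 := hone j (by rw [hij2]; simp)
    have hwi : w i ^ 2 = 1 := by omega
    have hwj : w j ^ 2 = 1 := by omega
    have hz : ∀ m, m ≠ i → m ≠ j → w m = 0 := by
      intro m hmi hmj
      by_contra h
      have : m ∈ s := (hmem m).mpr h
      rw [hij2] at this
      simp at this
      tauto
    rcases sq_eq_one _ hwi with h' | h'
    · exact ⟨i, j, hij, h', by omega, hz⟩
    · refine ⟨j, i, hij.symm, by omega, by omega, fun m h1 h2 => hz m h2 h1⟩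

end RootAux

namespace RootAux

lemma evec_mem (k : ℕ) (i j : Fin (k+2)) (hij : i ≠ j) :
    Evec k i.succ j.succ ∈ rootSet k (k+2) := by
  have h0 : Evec k i.succ j.succ 0 = 0 := by
    simp [Evec, (Fin.succ_ne_zero i).symm, (Fin.succ_ne_zero j).symm]
  have hsplit : ∀ m : Fin (k+2), Evec k i.succ j.succ m.succ
      = (if m = i then (1:ℤ) else 0) + (if m = j then (-1:ℤ) else 0) := by
    intro m
    simp only [Evec, Fin.succ_inj]
    by_cases h1 : m = i
    · subst h1
      simp [if_neg (Ne.symm hij), hij]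
    · by_cases h2 : m = j <;> simp [h1, h2, Ne.symm hij]
  apply mem_of_sums
  · rw [h0]
    simp only [hsplit, Finset.sum_add_distrib, Finset.sum_ite_eq' Finset.univ,
      Finset.mem_univ, if_true]
    ring
  · rw [h0]
    have : ∀ m : Fin (k+2), (Evec k i.succ j.succ m.succ)^2
        = (if m = i then (1:ℤ) else 0) + (if m = j then (1:ℤ) else 0) := by
      intro m
      rw [hsplit m]
      by_cases h1 : m = i
      · subst h1; simp [Ne.symm hij, hij]
      · by_cases h2 : m = j <;> simp [h1, h2, Ne.symm hij]
    simp only [this, Finset.sum_add_distrib, Finset.sum_ite_eq' Finset.univ,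
      Finset.mem_univ, if_true]
    ring

lemma uvec_mem (k : ℕ) (ε : ℤ) (hε : ε = 1 ∨ ε = -1) :
    Uvec k ε ∈ rootSet k (k+2) := by
  have hε2 : ε^2 = 1 := by rcases hε with h | h <;> simp [h]
  have h0 : Uvec k ε 0 = ε := by simp [Uvec]
  have hsucc : ∀ m : Fin (k+2), Uvec k ε m.succ = -ε := by
    intro m; simp [Uvec, Fin.succ_ne_zero]
  apply mem_of_sums
  · rw [h0]; simp only [hsucc, Finset.sum_const, Finset.card_univ, Fintype.card_fin,
      nsmul_eq_mul]
    push_cast; ring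
  · rw [h0]
    have : ∀ m : Fin (k+2), (Uvec k ε m.succ)^2 = 1 := by
      intro m; rw [hsucc m]; rw [neg_pow]; simp [hε2]
    simp only [this, Finset.sum_const, Finset.card_univ, Fintype.card_fin, nsmul_eq_mul, hε2]
    push_cast; ring

lemma mem_classify (k : ℕ) (hk : 1 ≤ k) (v : Fin (k+3) → ℤ) (hv : v ∈ rootSet k (k+2)) :
    (∃ p : Fin (k+2) × Fin (k+2), p.1 ≠ p.2 ∧ v = Evec k p.1.succ p.2.succ) ∨
    v = Uvec k 1 ∨ v = Uvec k (-1) := by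
  obtain ⟨hS, hQ⟩ := sums_of_mem k hk v hv
  have expand : ∑ i : Fin (k+2), (v i.succ + v 0)^2
      = (∑ i : Fin (k+2), (v i.succ)^2) + 2*(v 0)*(∑ i : Fin (k+2), v i.succ) + (k+2)*(v 0)^2 := by
    have h : ∀ i : Fin (k+2), (v i.succ + v 0)^2 = (v i.succ)^2 + (2*(v 0))*(v i.succ) + (v 0)^2 := by
      intro i; ring
    simp only [h]
    rw [Finset.sum_add_distrib, Finset.sum_add_distrib, ← Finset.mul_sum,
      Finset.sum_const, Finset.card_univ, Fintype.card_fin, nsmul_eq_mul]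
    push_cast; ring
  have key : ∑ i : Fin (k+2), (v i.succ + v 0)^2 = 2 - 2*(v 0)^2 := by
    rw [expand, hQ, hS]; ring
  have hnn : (0:ℤ) ≤ ∑ i : Fin (k+2), (v i.succ + v 0)^2 :=
    Finset.sum_nonneg (fun i _ => sq_nonneg _)
  have ha1 : (v 0)^2 ≤ 1 := by nlinarith
  have habs : -1 ≤ v 0 ∧ v 0 ≤ 1 := by constructor <;> nlinarith
  have htri : v 0 = -1 ∨ v 0 = 0 ∨ v 0 = 1 := by omega
  rcases htri with h0 | h0 | h0
  · -- v 0 = -1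
    right; right
    have hzero : ∑ i : Fin (k+2), (v i.succ + v 0)^2 = 0 := by rw [key, h0]; ring
    have heach := (Finset.sum_eq_zero_iff_of_nonneg (fun i _ => sq_nonneg _)).mp hzero
    funext m
    rcases Fin.eq_zero_or_eq_succ m with h | ⟨i, rfl⟩
    · subst h; simp [Uvec, h0]
    · have := heach i (Finset.mem_univ i)
      have hv' : v i.succ = 1 := by rw [h0] at this; nlinarith
      simp [Uvec, Fin.succ_ne_zero, hv']
  · -- v 0 = 0
    left
    have hS0 : ∑ i : Fin (k+2), v i.succ = 0 := by rw [hS, h0]; ring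
    have hQ0 : ∑ i : Fin (k+2), (v i.succ)^2 = 2 := by rw [hQ, h0]; ring
    obtain ⟨i, j, hij, hi, hj, hz⟩ := pair_classify (fun i : Fin (k+2) => v i.succ) hS0 hQ0
    refine ⟨(i, j), hij, ?_⟩
    funext m
    rcases Fin.eq_zero_or_eq_succ m with h | ⟨n, rfl⟩
    · subst h
      simp [Evec, (Fin.succ_ne_zero i).symm, (Fin.succ_ne_zero j).symm, h0]
    · simp only [Evec, Fin.succ_inj]
      by_cases h1 : n = i
      · subst h1; simp [hi]
      · by_cases h2 : n = j
        · subst h2; simp [h1, hj]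
        · simp [h1, h2, hz n h1 h2]
  · -- v 0 = 1
    right; left
    have hzero : ∑ i : Fin (k+2), (v i.succ + v 0)^2 = 0 := by rw [key, h0]; ring
    have heach := (Finset.sum_eq_zero_iff_of_nonneg (fun i _ => sq_nonneg _)).mp hzero
    funext m
    rcases Fin.eq_zero_or_eq_succ m with h | ⟨i, rfl⟩
    · subst h; simp [Uvec, h0]
    · have := heach i (Finset.mem_univ i)
      have hv' : v i.succ = -1 := by rw [h0] at this; nlinarith
      simp [Uvec, Fin.succ_ne_zero, hv']

end RootAux

namespace RootAux

noncomputable def F (k : ℕ) : Finset (Fin (k+3) → ℤ) :=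
  ((Finset.univ : Finset (Fin (k+2))).offDiag.image
    (fun p => Evec k p.1.succ p.2.succ)) ∪ {Uvec k 1, Uvec k (-1)}

lemma evec_inj (k : ℕ) : Set.InjOn (fun p : Fin (k+2) × Fin (k+2) => Evec k p.1.succ p.2.succ)
    ((Finset.univ : Finset (Fin (k+2))).offDiag : Set (Fin (k+2) × Fin (k+2))) := by
  rintro ⟨i, j⟩ hij ⟨i', j'⟩ hij' h
  simp only [Finset.coe_offDiag, Set.mem_offDiag] at hij hij'
  have hij1 : i ≠ j := hij.2.2
  have hij1' : i' ≠ j' := hij'.2.2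
  have h1 : (if i = i' then (1:ℤ) else if i = j' then -1 else 0) = 1 := by
    simpa [Evec, Fin.succ_inj] using (congrFun h i.succ).symm
  have h2 : (if j = i' then (1:ℤ) else if j = j' then -1 else 0) = -1 := by
    simpa [Evec, Fin.succ_inj, Ne.symm hij1] using (congrFun h j.succ).symm
  split_ifs at h1 h2 <;> simp_all [Prod.ext_iff]

lemma card_F (k : ℕ) : (F k).card = (k+2)*(k+1) + 2 := by
  rw [F]
  have hU : Uvec k (1:ℤ) ≠ Uvec k (-1) := by
    intro h
    have := congrFun h 0
    simp [Uvec] at this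
  have hdisj : Disjoint ((Finset.univ : Finset (Fin (k+2))).offDiag.image
      (fun p => Evec k p.1.succ p.2.succ)) ({Uvec k 1, Uvec k (-1)} : Finset (Fin (k+3) → ℤ)) := by
    rw [Finset.disjoint_left]
    intro x hx hx'
    simp only [Finset.mem_image] at hx
    obtain ⟨p, _, rfl⟩ := hx
    have h0 : Evec k p.1.succ p.2.succ 0 = 0 := by
      simp [Evec, (Fin.succ_ne_zero p.1).symm, (Fin.succ_ne_zero p.2).symm]
    simp only [Finset.mem_insert, Finset.mem_singleton] at hx'
    rcases hx' with h | h <;> · rw [h] at h0; simp [Uvec] at h0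
  rw [Finset.card_union_of_disjoint hdisj,
    Finset.card_image_of_injOn (evec_inj k), Finset.offDiag_card,
    Finset.card_pair hU]
  simp [Finset.card_univ]
  ring_nf
  omega

lemma rootSet_eq (k : ℕ) (hk : 1 ≤ k) : rootSet k (k+2) = (F k : Set (Fin (k+3) → ℤ)) := by
  ext v
  constructor
  · intro hv
    rcases mem_classify k hk v hv with ⟨⟨i, j⟩, hij, rfl⟩ | rfl | rfl
    · simp only [F, Finset.coe_union, Set.mem_union]
      left
      simp only [Finset.coe_image, Set.mem_image]
      exact ⟨(i, j), by simp [Finset.mem_coe, Finset.mem_offDiag, hij], rfl⟩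
    · simp [F]
    · simp [F]
  · intro hv
    simp only [F, Finset.coe_union, Set.mem_union, Finset.coe_image, Set.mem_image,
      Finset.coe_insert, Set.mem_insert_iff, Finset.coe_singleton, Set.mem_singleton_iff] at hv
    rcases hv with ⟨p, hp, rfl⟩ | h | h
    · have : p.1 ≠ p.2 := by
        simp only [Finset.mem_coe, Finset.mem_offDiag] at hp; exact hp.2.2
      exact evec_mem k p.1 p.2 this
    · rw [h]; exact uvec_mem k 1 (Or.inl rfl)
    · rw [h]; exact uvec_mem k (-1) (Or.inr rfl)

end RootAux

/-- For `l = k+2`, the root system `R^{k+2}_k` (of type `A_{k+1} × A₁`) has exactly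
`(k+2)(k+1) + 2` elements. -/
theorem rootSet_card_k_plus_two (k : ℕ) (hk : 1 ≤ k) :
    (rootSet k (k + 2)).ncard = (k + 2) * (k + 1) + 2 := by
  rw [RootAux.rootSet_eq k hk, Set.ncard_coe_finset, RootAux.card_F]
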